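/- Let p, q ∈ Δ(A×Θ) be outcomes, i a player, and a_i, b_i actions in the support of p with p_{a_i} ≠ p_{b_i}. Then there are at most two values of t ∈ (0,1) such that the conditional beliefs of tp+(1−t)q given a_i and given b_i coincide: (tp+(1−t)q)_{a_i} = (tp+(1−t)q)_{b_i}. -/
import Mathlib


open Finset

variable {I : Type} [Fintype I] [DecidableEq I]
  {A : I → Type} [∀ i, Fintype (A i)] [∀ i, DecidableEq (A i)]
  {Θ : Type} [Fintype Θ]

/-- The marginal probability that player `i` plays `ai` under outcome `p`. -/
noncomputable def marg (p : ((∀ j, A j) × Θ) → ℝ) (i : I) (ai : A i) : ℝ :=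
  ∑ x : (∀ j, A j) × Θ, if x.1 i = ai then p x else 0

/-- The conditional belief of player `i` given recommendation `ai`, represented
as a function on full profile-state pairs that ignores the `i`-th coordinate
(it is overridden by `ai`).  It is the zero function if `marg p i ai = 0`. -/
noncomputable def condBelief (p : ((∀ j, A j) × Θ) → ℝ) (i : I) (ai : A i) :
    ((∀ j, A j) × Θ) → ℝ :=
  fun x => p (Function.update x.1 i ai, x.2) / marg p i ai

/-- Expected utility for player `i` of playing `ci` against belief `μ`. -/
noncomputable def dev (u : ((∀ j, A j) × Θ) → ℝ) (i : I) (ci : A i)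
    (μ : ((∀ j, A j) × Θ) → ℝ) : ℝ :=
  ∑ x : (∀ j, A j) × Θ, u (Function.update x.1 i ci, x.2) * μ x

/-- Best responses of player `i` (with utility `u`) to belief `μ`. -/
noncomputable def BRset (u : ((∀ j, A j) × Θ) → ℝ) (i : I)
    (μ : ((∀ j, A j) × Θ) → ℝ) : Set (A i) :=
  {ci | ∀ di : A i, dev u i di μ ≤ dev u i ci μ}

/-- The obedience constraint defining a Bayes correlated equilibrium. -/
def Obedient (u : ∀ i : I, ((∀ j, A j) × Θ) → ℝ) (p : ((∀ j, A j) × Θ) → ℝ) : Prop :=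
  ∀ i : I, ∀ ai bi : A i,
    0 ≤ ∑ x : (∀ j, A j) × Θ,
      (if x.1 i = ai then (u i x - u i (Function.update x.1 i bi, x.2)) * p x else 0)

/-- The separation constraint: recommendations inducing distinct beliefs have
disjoint best-response sets. -/
def Separated (u : ∀ i : I, ((∀ j, A j) × Θ) → ℝ) (p : ((∀ j, A j) × Θ) → ℝ) : Prop :=
  ∀ i : I, ∀ ai bi : A i, 0 < marg p i ai → 0 < marg p i bi →
    condBelief p i ai ≠ condBelief p i bi →
    BRset (u i) i (condBelief p i ai) ∩ BRset (u i) i (condBelief p i bi) = ∅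

/-- `p` is an outcome with `Θ`-marginal `π`. -/
def IsOutcome (π : Θ → ℝ) (p : ((∀ j, A j) × Θ) → ℝ) : Prop :=
  (∀ x, 0 ≤ p x) ∧ ∀ θ, (∑ a : ∀ j, A j, p (a, θ)) = π θ


open Polynomial in
lemma list_two_aux (l : List ℝ) (h : l.length ≤ 2) :
    ∃ t1 t2 : ℝ, ∀ t ∈ l, t = t1 ∨ t = t2 := by
  match l with
  | [] => exact ⟨0, 0, by simp⟩
  | [a] => exact ⟨a, a, by simp⟩
  | [a, b] => exact ⟨a, b, by simp⟩
  | a :: b :: c :: _ => simp at h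

open Polynomial in
lemma quad_roots (c0 c1 c2 : ℝ) (h : c0 + c1 + c2 ≠ 0) :
    ∃ t1 t2 : ℝ, ∀ t : ℝ, c0 + c1 * t + c2 * t ^ 2 = 0 → t = t1 ∨ t = t2 := by
  set P : ℝ[X] := C c2 * X ^ 2 + C c1 * X + C c0 with hP
  have heval : ∀ t : ℝ, P.eval t = c0 + c1 * t + c2 * t ^ 2 := by
    intro t; simp [hP]; ring
  have hP0 : P ≠ 0 := by
    intro h0
    apply h
    have := heval 1
    rw [h0] at this
    simp at this
    linarith
  have hdeg : P.natDegree ≤ 2 := by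
    rw [hP]; compute_degree
  have hcard : Multiset.card P.roots ≤ 2 := le_trans (P.card_roots') hdeg
  obtain ⟨t1, t2, ht⟩ := list_two_aux P.roots.toList
    (by rwa [Multiset.length_toList])
  refine ⟨t1, t2, fun t hroot => ?_⟩
  apply ht
  rw [Multiset.mem_toList, Polynomial.mem_roots hP0, IsRoot, heval]
  exact hroot

lemma marg_comb (p q : ((∀ j, A j) × Θ) → ℝ) (i : I) (ai : A i) (t : ℝ) :
    marg (fun x => t * p x + (1 - t) * q x) i ai
      = t * marg p i ai + (1 - t) * marg q i ai := by
  simp only [marg, Finset.mul_sum, ← Finset.sum_add_distrib]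
  apply Finset.sum_congr rfl
  intro x _
  split <;> ring

lemma marg_nonneg (p : ((∀ j, A j) × Θ) → ℝ) (hp0 : ∀ x, 0 ≤ p x) (i : I) (ai : A i) :
    0 ≤ marg p i ai := by
  apply Finset.sum_nonneg
  intro x _
  split
  · exact hp0 x
  · exact le_refl 0

/-- if `a_i, b_i` are in the support of `p` with distinct
conditional beliefs, then there are at most two values of `t ∈ (0,1)` at which
the conditional beliefs of `t•p + (1−t)•q` given `a_i` and `b_i` coincide. -/
theorem stmt5 {I : Type} [Fintype I] [DecidableEq I]
    {A : I → Type} [∀ i, Fintype (A i)] [∀ i, DecidableEq (A i)]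
    {Θ : Type} [Fintype Θ]
    (p q : ((∀ j, A j) × Θ) → ℝ)
    (hp0 : ∀ x, 0 ≤ p x) (hq0 : ∀ x, 0 ≤ q x)
    (hp1 : ∑ x : (∀ j, A j) × Θ, p x = 1) (hq1 : ∑ x : (∀ j, A j) × Θ, q x = 1)
    (i : I) (ai bi : A i)
    (hai : 0 < marg p i ai) (hbi : 0 < marg p i bi)
    (hneq : condBelief p i ai ≠ condBelief p i bi) :
    ∃ t1 t2 : ℝ, ∀ t ∈ Set.Ioo (0 : ℝ) 1,
      condBelief (fun x => t * p x + (1 - t) * q x) i ai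
        = condBelief (fun x => t * p x + (1 - t) * q x) i bi →
      t = t1 ∨ t = t2 := by
  have hx : ∃ x : (∀ j, A j) × Θ,
      p (Function.update x.1 i ai, x.2) / marg p i ai
        ≠ p (Function.update x.1 i bi, x.2) / marg p i bi := by
    by_contra hc
    push_neg at hc
    exact hneq (funext fun x => hc x)
  obtain ⟨x₀, hx₀⟩ := hx
  set Pa := p (Function.update x₀.1 i ai, x₀.2) with hPa
  set Pb := p (Function.update x₀.1 i bi, x₀.2) with hPb
  set Qa := q (Function.update x₀.1 i ai, x₀.2) with hQa
  set Qb := q (Function.update x₀.1 i bi, x₀.2) with hQb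
  set Ma := marg p i ai
  set Mb := marg p i bi
  set Na := marg q i ai
  set Nb := marg q i bi
  have hNa : 0 ≤ Na := marg_nonneg q hq0 i ai
  have hNb : 0 ≤ Nb := marg_nonneg q hq0 i bi
  have hcross : Pa * Mb - Pb * Ma ≠ 0 := by
    intro h
    apply hx₀
    rw [div_eq_div_iff hai.ne' hbi.ne']
    linarith
  obtain ⟨t1, t2, ht⟩ := quad_roots (Qa * Nb - Qb * Na)
    ((Pa - Qa) * Nb + Qa * (Mb - Nb) - (Pb - Qb) * Na - Qb * (Ma - Na))
    ((Pa - Qa) * (Mb - Nb) - (Pb - Qb) * (Ma - Na))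
    (by intro h; apply hcross; nlinarith [h])
  refine ⟨t1, t2, fun t ht' heq => ?_⟩
  obtain ⟨ht0, ht1⟩ := ht'
  apply ht
  have h := congrFun heq x₀
  simp only [condBelief, marg_comb] at h
  have hMa : 0 < t * Ma + (1 - t) * Na := by nlinarith
  have hMb : 0 < t * Mb + (1 - t) * Nb := by nlinarith
  rw [div_eq_div_iff hMa.ne' hMb.ne'] at h
  nlinarith [h]
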